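/- arXiv:1611.02187 — 5 statements merged into one kernel-verified Lean document; each statement's English description precedes it below -/
import Mathlib

section
/- Let G be a group in which roots are unique, i.e., for all a, b in G and every nonzero integer m, a^m = b^m implies a = b. Then for every a in G and every nonzero integer m, the centralizer of a in G equals the centralizer of a^m in G. -/
theorem centralizer_eq_centralizer_zpow_of_unique_roots {G : Type*} [Group G]
    (huniq : ∀ (a b : G) (m : ℤ), m ≠ 0 → a ^ m = b ^ m → a = b)
    (a : G) (m : ℤ) (hm : m ≠ 0) :
    Subgroup.centralizer {a} = Subgroup.centralizer {a ^ m} := by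
  ext g
  simp only [Subgroup.mem_centralizer_singleton_iff]
  constructor
  · intro h
    exact (Commute.zpow_right h m).eq
  · intro h
    have key : (g * a * g⁻¹) ^ m = a ^ m := by
      rw [conj_zpow, mul_inv_eq_iff_eq_mul, ← h]
    have := huniq (g * a * g⁻¹) a m hm key
    calc g * a = (g * a * g⁻¹) * g := by group
      _ = a * g := by rw [this]
end

section
/- Let G be a torsion-free group in which roots are unique, and let x, y in G be such that x^k = y^m for some nonzero integers k and m. Then the subgroup generated by x and y is cyclic. -/
/-!
If `x ^ k = y ^ m`, then `y` commutes with `x ^ k`, hence `y x y⁻¹` and `x` have the same `k`-th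
power, so `x` and `y` commute by uniqueness of roots. The subgroup `H` they generate is then abelian,
so `g ↦ g ^ k` is a homomorphism on `H`; it is injective by uniqueness of roots and takes values in
the cyclic group `⟨y⟩`, since `x ^ k = y ^ m`. Hence `H` embeds into a cyclic group.
-/

/-- The December 2024 Mathlib definition, removed since: every nontrivial element has infinite order. -/
def Monoid.IsTorsionFree (G : Type*) [Monoid G] : Prop :=
  ∀ g : G, g ≠ 1 → ¬IsOfFinOrder g

def UniqueRoots (G : Type*) [Group G] : Prop :=
  ∀ (a b : G) (m : ℤ), m ≠ 0 → a ^ m = b ^ m → a = b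

theorem zpow_mem_of_mem_closure {G : Type*} [Group G] {s : Set G}
    [IsMulCommutative (Subgroup.closure s)] {K : Subgroup G} {k : ℤ} (hs : ∀ g ∈ s, g ^ k ∈ K)
    {g : G} (hg : g ∈ Subgroup.closure s) : g ^ k ∈ K := by
  induction hg using Subgroup.closure_induction with
  | mem g hg => exact hs g hg
  | one => simp only [one_zpow, Subgroup.one_mem]
  | mul a b ha hb iha ihb =>
    rw [Commute.mul_zpow (setLike_mul_comm ha hb)]
    exact Subgroup.mul_mem _ iha ihb
  | inv a _ iha => simpa only [inv_zpow] using Subgroup.inv_mem _ iha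

namespace UniqueRoots

variable {G : Type*} [Group G] (hG : UniqueRoots G) {k : ℤ} (hk : k ≠ 0)
include hG hk

theorem commute_of_commute_zpow {x y : G} (h : Commute y (x ^ k)) : Commute y x := by
  have hconj : (y * x * y⁻¹) ^ k = x ^ k := by rw [conj_zpow, h.eq, mul_inv_cancel_right]
  exact mul_inv_eq_iff_eq_mul.mp (hG _ _ k hk hconj)

theorem isCyclic_of_zpow_mem_zpowers {H : Subgroup G} [IsMulCommutative H] {y : G}
    (hpow : ∀ g ∈ H, g ^ k ∈ Subgroup.zpowers y) : IsCyclic H := by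
  let f : H →* Subgroup.zpowers y :=
    { toFun g := ⟨g ^ k, hpow g g.2⟩
      map_one' := by ext; simp
      map_mul' a b := by
        ext
        exact Commute.mul_zpow (setLike_mul_comm a.2 b.2) k }
  exact isCyclic_of_injective f fun a b hab =>
    Subtype.ext (hG a b k hk (congrArg Subtype.val hab))

end UniqueRoots

theorem cyclic_of_common_power_general {G : Type*} [Group G]
    (huniq : ∀ (a b : G) (m : ℤ), m ≠ 0 → a ^ m = b ^ m → a = b)
    (x y : G) (k m : ℤ) (hk : k ≠ 0) (h : x ^ k = y ^ m) :
    IsCyclic (Subgroup.closure ({x, y} : Set G)) := by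
  have hG : UniqueRoots G := huniq
  have hxy : Commute x y :=
    (hG.commute_of_commute_zpow hk (h ▸ Commute.self_zpow y m)).symm
  have : IsMulCommutative (Subgroup.closure ({x, y} : Set G)) := by
    refine Subgroup.isMulCommutative_closure ?_
    rintro a (rfl | rfl) b (rfl | rfl)
    exacts [rfl, hxy.eq, hxy.symm.eq, rfl]
  refine hG.isCyclic_of_zpow_mem_zpowers hk (y := y) fun g hg => zpow_mem_of_mem_closure ?_ hg
  rintro g (rfl | rfl)
  exacts [h ▸ Subgroup.zpow_mem_zpowers y m, Subgroup.zpow_mem_zpowers g k]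

theorem cyclic_of_common_power {G : Type*} [Group G]
    (htf : Monoid.IsTorsionFree G)
    (huniq : ∀ (a b : G) (m : ℤ), m ≠ 0 → a ^ m = b ^ m → a = b)
    (x y : G) (k m : ℤ) (hk : k ≠ 0) (hm : m ≠ 0) (h : x ^ k = y ^ m) :
    IsCyclic (Subgroup.closure ({x, y} : Set G)) :=
  cyclic_of_common_power_general huniq x y k m hk h
end

section
/- Let G be a torsion-free group, H an infinite cyclic normal subgroup of a subgroup N of G (for example N the normalizer of H). Then every finite subgroup of the quotient N/H is cyclic. -/
/-!
The preimage `P` of `F` in `N` is torsion-free and contains the infinite cyclic group `H` as a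
normal subgroup of finite index `m`. For `x ∈ P` write `x g x⁻¹ = g ^ a` and `x ^ m = g ^ k`, where
`g` generates `H`; since `x` commutes with `x ^ m`, `g ^ (a k) = g ^ k`, so `a = 1` unless `x = 1`.
Thus `H` is central, the centre of `P` has finite index, and the transfer `x ↦ x ^ [P : Z(P)]`
into the centre is injective by torsion-freeness, so `P` is abelian. Then `x ↦ x ^ m` embeds `P`
into `H`, hence `P` is cyclic, and so is its image `F`.
-/

open Subgroup

section

variable {G : Type*} [Group G]

theorem eq_one_of_pow_eq_one_of_torsionFree (htf : ∀ g : G, g ≠ 1 → ¬IsOfFinOrder g)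
    {x : G} {n : ℕ} (hn : n ≠ 0) (h : x ^ n = 1) : x = 1 :=
  of_not_not fun hx ↦ htf x hx (isOfFinOrder_iff_pow_eq_one.mpr ⟨n, Nat.pos_of_ne_zero hn, h⟩)

theorem torsionFree_of_injective {G' : Type*} [Group G'] (f : G' →* G) (hf : Function.Injective f)
    (htf : ∀ g : G, g ≠ 1 → ¬IsOfFinOrder g) : ∀ x : G', x ≠ 1 → ¬IsOfFinOrder x :=
  fun x hx hfin ↦ htf (f x) ((map_ne_one_iff f hf).mpr hx) (hf.isOfFinOrder_iff.mpr hfin)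

theorem commute_of_conj_eq_zpow_of_pow_eq_zpow (htf : ∀ g : G, g ≠ 1 → ¬IsOfFinOrder g)
    {x g : G} {a k : ℤ} {m : ℕ} (hm : m ≠ 0) (hconj : x * g * x⁻¹ = g ^ a)
    (hpow : x ^ m = g ^ k) : Commute x g := by
  rcases eq_or_ne g 1 with rfl | hg
  · exact Commute.one_right x
  have hinj : Function.Injective (g ^ · : ℤ → G) :=
    injective_zpow_iff_not_isOfFinOrder.mpr (htf g hg)
  have hak : a * k = k := hinj <| calc
    g ^ (a * k) = (x * g * x⁻¹) ^ k := by rw [zpow_mul, hconj]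
    _ = x * x ^ m * x⁻¹ := by rw [conj_zpow, hpow]
    _ = g ^ k := by rw [(Commute.self_pow x m).eq, mul_inv_cancel_right, hpow]
  rcases eq_or_ne k 0 with rfl | hk
  · rw [zpow_zero] at hpow
    rw [eq_one_of_pow_eq_one_of_torsionFree htf hm hpow]
    exact Commute.one_left g
  · rw [mul_eq_right₀ hk] at hak
    rw [hak, zpow_one, mul_inv_eq_iff_eq_mul] at hconj
    exact hconj

theorem Subgroup.le_center_of_torsionFree (htf : ∀ g : G, g ≠ 1 → ¬IsOfFinOrder g)
    (K : Subgroup G) [K.Normal] [K.FiniteIndex] [IsCyclic K] : K ≤ center G := by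
  obtain ⟨g, rfl⟩ := K.isCyclic_iff_exists_zpowers_eq_top.mp ‹_›
  rw [zpowers_le, mem_center_iff]
  intro x
  obtain ⟨a, ha⟩ := mem_zpowers_iff.mp (‹(zpowers g).Normal›.conj_mem g (mem_zpowers g) x)
  obtain ⟨k, hk⟩ := mem_zpowers_iff.mp ((zpowers g).pow_index_mem x)
  exact commute_of_conj_eq_zpow_of_pow_eq_zpow htf FiniteIndex.index_ne_zero ha.symm hk.symm

theorem commute_of_torsionFree_of_center_finiteIndex (htf : ∀ g : G, g ≠ 1 → ¬IsOfFinOrder g)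
    [(center G).FiniteIndex] (a b : G) : Commute a b := by
  have hinj : Function.Injective (MonoidHom.transferCenterPow G) := by
    refine (injective_iff_map_eq_one _).mpr fun x hx ↦ ?_
    refine eq_one_of_pow_eq_one_of_torsionFree htf (FiniteIndex.index_ne_zero (H := center G)) ?_
    rw [← MonoidHom.transferCenterPow_apply, hx, OneMemClass.coe_one]
  refine hinj (?_ : MonoidHom.transferCenterPow G (a * b) = MonoidHom.transferCenterPow G (b * a))
  rw [map_mul, map_mul, mul_comm']

theorem isCyclic_of_isMulTorsionFree_of_finiteIndex {A : Type*} [CommGroup A]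
    [IsMulTorsionFree A] (K : Subgroup A) [IsCyclic K] [K.FiniteIndex] : IsCyclic A :=
  isCyclic_of_injective ((powMonoidHom K.index).codRestrict K K.pow_index_mem)
    fun _ _ h ↦ pow_left_injective FiniteIndex.index_ne_zero (congrArg Subtype.val h)

theorem isCyclic_of_torsionFree_of_normal_finiteIndex (htf : ∀ g : G, g ≠ 1 → ¬IsOfFinOrder g)
    (K : Subgroup G) [K.Normal] [K.FiniteIndex] [IsCyclic K] : IsCyclic G := by
  have : (center G).FiniteIndex := finiteIndex_of_le (K.le_center_of_torsionFree htf)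
  let _ : CommGroup G := { mul_comm := commute_of_torsionFree_of_center_finiteIndex htf }
  have : IsMulTorsionFree G := .of_not_isOfFinOrder fun x hx ↦ htf x hx
  exact isCyclic_of_isMulTorsionFree_of_finiteIndex K

theorem isCyclic_of_finite_of_torsionFree_of_isCyclic_normal
    (htf : ∀ g : G, g ≠ 1 → ¬IsOfFinOrder g) (H : Subgroup G) [H.Normal] [IsCyclic H]
    (F : Subgroup (G ⧸ H)) [Finite F] : IsCyclic F := by
  set P := F.comap (QuotientGroup.mk' H)
  set φ : P →* F := (QuotientGroup.mk' H).subgroupComap F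
  have hker : φ.ker = H.subgroupOf P := by
    ext x
    rw [MonoidHom.mem_ker, mem_subgroupOf, ← QuotientGroup.eq_one_iff, Subtype.ext_iff]
    rfl
  have hHP : H ≤ P := by simpa using (QuotientGroup.mk' H).ker_le_comap F
  have : IsCyclic (H.subgroupOf P) :=
    isCyclic_of_surjective _ (subgroupOfEquivOfLe hHP).symm.surjective
  have : (H.subgroupOf P).FiniteIndex := hker ▸ finiteIndex_ker φ
  have : IsCyclic P := isCyclic_of_torsionFree_of_normal_finiteIndex
    (torsionFree_of_injective P.subtype P.subtype_injective htf) (H.subgroupOf P)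
  exact isCyclic_of_surjective φ
    ((QuotientGroup.mk' H).subgroupComap_surjective_of_surjective F (QuotientGroup.mk'_surjective H))

end

theorem finite_subgroup_of_quotient_by_infinite_cyclic_is_cyclic_general
    {G : Type*} [Group G] (htf : ∀ g : G, g ≠ 1 → ¬IsOfFinOrder g)
    (N : Subgroup G) (H : Subgroup N) (hH : H.Normal)
    (hcyc : IsCyclic H)
    (F : Subgroup (N ⧸ H)) (hF : Finite F) :
    IsCyclic F :=
  isCyclic_of_finite_of_torsionFree_of_isCyclic_normal
    (torsionFree_of_injective N.subtype N.subtype_injective htf) H F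

theorem finite_subgroup_of_quotient_by_infinite_cyclic_is_cyclic
    {G : Type*} [Group G] (htf : ∀ g : G, g ≠ 1 → ¬IsOfFinOrder g)
    (N : Subgroup G) (H : Subgroup N) (hH : H.Normal)
    (hcyc : IsCyclic H) (hinf : Infinite H)
    (F : Subgroup (N ⧸ H)) (hF : Finite F) :
    IsCyclic F :=
  finite_subgroup_of_quotient_by_infinite_cyclic_is_cyclic_general htf N H hH hcyc F hF
end

section
/- Let G be a torsion-free group and let H be an infinite cyclic subgroup of G generated by an element x with the property that ⟨x⟩ is maximal among cyclic subgroups of G containing it (i.e., if x = w^k for some w in G and integer k, then w ∈ ⟨x⟩). Suppose N is a subgroup of G containing H with H normal in N. Then the quotient N/H is torsion-free, provided that any α in N with α^m ∈ H for some nonzero m commutes with x. -/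
/-!
If `α` commutes with `x` and `α ^ n = x ^ k` with `n ≠ 0`, write `d = gcd n k`. Torsion-freeness
extracts the `d`-th root of the commuting relation, so `α ^ n' = x ^ k'` with `n'`, `k'` coprime.
Choosing `u n' + v k' = 1`, the element `w = α ^ v * x ^ u` satisfies `w ^ n' = x`; maximality of
`⟨x⟩` puts `w`, hence `α ^ v`, and finally `α = (α ^ n') ^ u * (α ^ v) ^ k'` into `⟨x⟩`.
-/

open Subgroup

section

variable {G : Type*} [Group G]

theorem Monoid.IsTorsionFree.eq_one_of_zpow_eq_one (htf : Monoid.IsTorsionFree G) {y : G}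
    {m : ℤ} (hm : m ≠ 0) (h : y ^ m = 1) : y = 1 :=
  of_not_not fun hy ↦ htf y hy (isOfFinOrder_iff_zpow_eq_one.2 ⟨m, hm, h⟩)

theorem Monoid.IsTorsionFree.zpow_eq_zpow_of_zpow_mul_eq (htf : Monoid.IsTorsionFree G)
    {a b : G} (hab : Commute a b) {n k d : ℤ} (hd : d ≠ 0) (h : a ^ (n * d) = b ^ (k * d)) :
    a ^ n = b ^ k := by
  refine mul_inv_eq_one.1 (htf.eq_one_of_zpow_eq_one hd ?_)
  rw [← zpow_neg, (hab.zpow_zpow n (-k)).mul_zpow, ← zpow_mul, ← zpow_mul, neg_mul, zpow_neg, h,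
    mul_inv_cancel]

theorem mem_zpowers_of_zpow_eq_zpow_of_isCoprime {a x : G}
    (hmax : ∀ (w : G) (k : ℤ), x = w ^ k → w ∈ zpowers x) (hax : Commute a x) {n k : ℤ}
    (hnk : IsCoprime n k) (h : a ^ n = x ^ k) : a ∈ zpowers x := by
  obtain ⟨u, v, huv⟩ := hnk
  have hroot : x = (a ^ v * x ^ u) ^ n := by
    rw [(hax.zpow_zpow v u).mul_zpow, ← zpow_mul, ← zpow_mul, mul_comm v n, zpow_mul, h,
      ← zpow_mul, ← zpow_add, show k * v + u * n = 1 by linarith, zpow_one]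
  have hav : a ^ v ∈ zpowers x := by
    simpa using mul_mem (hmax _ n hroot) (zpow_mem (mem_zpowers x) (-u))
  have ha : a = (a ^ n) ^ u * (a ^ v) ^ k := by
    rw [← zpow_mul, ← zpow_mul, ← zpow_add, show n * u + v * k = 1 by linarith, zpow_one]
  rw [ha, h]
  exact mul_mem (zpow_mem (zpow_mem (mem_zpowers x) k) u) (zpow_mem hav k)

theorem Monoid.IsTorsionFree.mem_zpowers_of_zpow_mem (htf : Monoid.IsTorsionFree G) {a x : G}
    (hmax : ∀ (w : G) (k : ℤ), x = w ^ k → w ∈ zpowers x) (hax : Commute a x) {n : ℤ}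
    (hn : n ≠ 0) (h : a ^ n ∈ zpowers x) : a ∈ zpowers x := by
  obtain ⟨k, hk⟩ := mem_zpowers_iff.1 h
  obtain ⟨d, n', k', hd, hcop, rfl, rfl⟩ := Int.exists_gcd_one' (Int.gcd_pos_of_ne_zero_left k hn)
  refine mem_zpowers_of_zpow_eq_zpow_of_isCoprime hmax hax (Int.isCoprime_iff_gcd_eq_one.2 hcop) ?_
  exact htf.zpow_eq_zpow_of_zpow_mul_eq hax (Int.natCast_ne_zero.2 hd.ne') hk.symm

end

theorem quotient_by_maximal_cyclic_torsionFree_general {G : Type*} [Group G]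
    (htf : Monoid.IsTorsionFree G) (x : G)
    (hmax : ∀ (w : G) (k : ℤ), x = w ^ k → w ∈ Subgroup.zpowers x)
    (N : Subgroup G)
    (hnorm : ((Subgroup.zpowers x).subgroupOf N).Normal)
    (hcomm : ∀ α ∈ N, (∃ m : ℤ, m ≠ 0 ∧ α ^ m ∈ Subgroup.zpowers x) → α * x = x * α) :
    Monoid.IsTorsionFree (N ⧸ (Subgroup.zpowers x).subgroupOf N) := by
  rintro g hg hfin
  obtain ⟨α, rfl⟩ := QuotientGroup.mk_surjective g
  obtain ⟨n, hn, hαn⟩ := isOfFinOrder_iff_zpow_eq_one.1 hfin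
  rw [← QuotientGroup.mk_zpow, QuotientGroup.eq_one_iff, mem_subgroupOf, coe_zpow] at hαn
  have hαx : Commute (α : G) x := hcomm α α.2 ⟨n, hn, hαn⟩
  have hα : (α : G) ∈ zpowers x := htf.mem_zpowers_of_zpow_mem hmax hαx hn hαn
  exact hg ((QuotientGroup.eq_one_iff α).2 (mem_subgroupOf.2 hα))

theorem quotient_by_maximal_cyclic_torsionFree {G : Type*} [Group G]
    (htf : Monoid.IsTorsionFree G) (x : G)
    (hmax : ∀ (w : G) (k : ℤ), x = w ^ k → w ∈ Subgroup.zpowers x)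
    (N : Subgroup G) (hx : x ∈ N)
    (hnorm : ((Subgroup.zpowers x).subgroupOf N).Normal)
    (hcomm : ∀ α ∈ N, (∃ m : ℤ, m ≠ 0 ∧ α ^ m ∈ Subgroup.zpowers x) → α * x = x * α) :
    Monoid.IsTorsionFree (N ⧸ (Subgroup.zpowers x).subgroupOf N) :=
  quotient_by_maximal_cyclic_torsionFree_general htf x hmax N hnorm hcomm
end

section
/- Let B_n be the braid group on n strands, presented by generators σ_1, ..., σ_{n-1} with relations σ_i σ_j = σ_j σ_i for |i-j| > 1 and σ_i σ_j σ_i = σ_j σ_i σ_j for |i-j| = 1. Define a_i = (σ_i σ_{i+1} ⋯ σ_{n-1})(σ_{n-1} ⋯ σ_{i+1} σ_i) for 1 ≤ i ≤ n-1. Then the elements a_1, ..., a_{n-1} pairwise commute. -/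
/-- Braid relations on `m` generators `σ_0, …, σ_{m-1}`:
`σ_i σ_j = σ_j σ_i` when `|i-j| > 1` and `σ_i σ_j σ_i = σ_j σ_i σ_j` when `|i-j| = 1`. -/
def braidRels (m : ℕ) : Set (FreeGroup (Fin m)) :=
  { r | (∃ i j : Fin m, (i : ℕ) + 1 < (j : ℕ) ∧
          r = FreeGroup.of i * FreeGroup.of j * (FreeGroup.of i)⁻¹ * (FreeGroup.of j)⁻¹) ∨
        (∃ i j : Fin m, (i : ℕ) + 1 = (j : ℕ) ∧
          r = FreeGroup.of i * FreeGroup.of j * FreeGroup.of i *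
              (FreeGroup.of j * FreeGroup.of i * FreeGroup.of j)⁻¹) }

/-- The braid group `B_n` on `n` strands. -/
def BraidGroup (n : ℕ) := PresentedGroup (braidRels (n - 1))

instance (n : ℕ) : Group (BraidGroup n) := by unfold BraidGroup; infer_instance

/-- The generator `σ_i` of `B_n` (0-indexed), extended by `1` for out-of-range indices. -/
def sigma (n : ℕ) (k : ℕ) : BraidGroup n :=
  if h : k < n - 1 then PresentedGroup.of (⟨k, h⟩ : Fin (n - 1)) else 1

/-- `a_i = (σ_i σ_{i+1} ⋯ σ_{n-2}) (σ_{n-2} ⋯ σ_{i+1} σ_i)` (0-indexed). -/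
def braidA (n : ℕ) (i : ℕ) : BraidGroup n :=
  ((List.Ico i (n - 1)).map (sigma n)).prod *
    ((List.Ico i (n - 1)).reverse.map (sigma n)).prod

/-!
Writing `a_i = σ_i a_{i+1} σ_i`, everything reduces to adjacent indices: for `i + 1 < j` the
generator `σ_i` commutes with every letter of `a_j`. For `a_i` and `a_{i+1}`, put `b = a_{i+2}`,
`σ = σ_i`, `τ = σ_{i+1}`; then `σ` commutes with `b`, `τbτ` commutes with `b` by downward
induction on `i`, and the braid relation `στσ = τστ` lets `σ(τbτ)σ` pass through `τbτ`.
-/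

theorem Commute.sandwich_of_braid {G : Type*} [Group G] {σ τ b : G} (hστ : σ * τ * σ = τ * σ * τ)
    (hσb : Commute σ b) (hb : Commute (τ * b * τ) b) :
    Commute (σ * (τ * b * τ) * σ) (τ * b * τ) := by
  calc σ * (τ * b * τ) * σ * (τ * b * τ)
      = σ * τ * b * (τ * σ * τ) * b * τ := by group
    _ = σ * τ * σ * b * τ * b * σ * τ := by rw [← hστ]; simp only [mul_assoc, hσb.left_comm]
    _ = τ * σ * (τ * b * τ * b) * σ * τ := by rw [hστ]; group
    _ = τ * b * σ * (τ * b * τ) * σ * τ := by rw [hb.eq]; simp only [mul_assoc, hσb.left_comm]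
    _ = τ * b * σ * τ * b * (σ * τ * σ) := by rw [hστ]; group
    _ = τ * b * (σ * τ * σ) * b * τ * σ := by simp only [mul_assoc, hσb.left_comm]
    _ = τ * b * τ * (σ * (τ * b * τ) * σ) := by rw [hστ]; group

namespace BraidGroup

variable {n : ℕ}

theorem of_mul_of_comm {i j : Fin (n - 1)} (h : (i : ℕ) + 1 < j) :
    (PresentedGroup.of i * PresentedGroup.of j : BraidGroup n) =
      PresentedGroup.of j * PresentedGroup.of i := by
  refine PresentedGroup.mk_eq_mk_of_mul_inv_mem (Or.inl ⟨i, j, h, ?_⟩)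
  simp only [mul_inv_rev, mul_assoc]

theorem of_mul_of_mul_of {i j : Fin (n - 1)} (h : (i : ℕ) + 1 = j) :
    (PresentedGroup.of i * PresentedGroup.of j * PresentedGroup.of i : BraidGroup n) =
      PresentedGroup.of j * PresentedGroup.of i * PresentedGroup.of j :=
  PresentedGroup.mk_eq_mk_of_mul_inv_mem (Or.inr ⟨i, j, h, rfl⟩)

end BraidGroup

section

variable (n : ℕ)

theorem sigma_of_le {k : ℕ} (h : n - 1 ≤ k) : sigma n k = 1 :=
  dif_neg (by omega)

theorem commute_sigma_sigma {k l : ℕ} (h : k + 1 < l) : Commute (sigma n k) (sigma n l) := by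
  by_cases hl : l < n - 1
  · unfold sigma
    simp only [hl, show k < n - 1 by omega, ↓reduceDIte]
    exact BraidGroup.of_mul_of_comm h
  · rw [sigma_of_le n (k := l) (by omega)]
    exact Commute.one_right _

theorem sigma_mul_sigma_succ_mul_sigma {k : ℕ} (h : k + 1 < n - 1) :
    sigma n k * sigma n (k + 1) * sigma n k = sigma n (k + 1) * sigma n k * sigma n (k + 1) := by
  unfold sigma
  simp only [h, show k < n - 1 by omega, ↓reduceDIte]
  exact BraidGroup.of_mul_of_mul_of rfl

theorem braidA_of_le {i : ℕ} (h : n - 1 ≤ i) : braidA n i = 1 := by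
  simp [braidA, List.Ico.eq_nil_of_le h]

theorem braidA_eq_sigma_mul_braidA_succ_mul_sigma (i : ℕ) :
    braidA n i = sigma n i * braidA n (i + 1) * sigma n i := by
  by_cases h : i < n - 1
  · simp [braidA, List.Ico.eq_cons h, mul_assoc]
  · rw [braidA_of_le n (by omega), braidA_of_le n (by omega), sigma_of_le n (by omega), mul_one,
      mul_one]

theorem commute_sigma_braidA {k j : ℕ} (h : k + 1 < j) : Commute (sigma n k) (braidA n j) := by
  have hIco : ∀ l ∈ List.Ico j (n - 1), Commute (sigma n k) (sigma n l) := fun l hl =>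
    commute_sigma_sigma n (by have := List.Ico.mem.mp hl; omega)
  refine .mul_right (.list_prod_right _ _ ?_) (.list_prod_right _ _ ?_) <;>
    simpa only [List.forall_mem_map, List.mem_reverse] using hIco

theorem commute_braidA_braidA_succ (i : ℕ) : Commute (braidA n i) (braidA n (i + 1)) := by
  by_cases h : i + 1 < n - 1
  · have hb := commute_braidA_braidA_succ (i + 1)
    rw [braidA_eq_sigma_mul_braidA_succ_mul_sigma n (i + 1)] at hb
    rw [braidA_eq_sigma_mul_braidA_succ_mul_sigma n i,
      braidA_eq_sigma_mul_braidA_succ_mul_sigma n (i + 1)]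
    exact .sandwich_of_braid (sigma_mul_sigma_succ_mul_sigma n h)
      (commute_sigma_braidA n (by omega)) hb
  · rw [braidA_of_le n (i := i + 1) (by omega)]
    exact Commute.one_right _
termination_by n - 1 - i

theorem commute_braidA_of_le {i j : ℕ} (hij : i ≤ j) : Commute (braidA n i) (braidA n j) := by
  obtain rfl | rfl | h : i = j ∨ i + 1 = j ∨ i + 1 < j := by omega
  · exact Commute.refl _
  · exact commute_braidA_braidA_succ n i
  · rw [braidA_eq_sigma_mul_braidA_succ_mul_sigma n i]
    have hσ := commute_sigma_braidA n h
    exact (hσ.mul_left (commute_braidA_of_le h.le)).mul_left hσ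
termination_by j - i

end

theorem braidA_pairwise_commute_general (n : ℕ) (i j : ℕ) :
    braidA n i * braidA n j = braidA n j * braidA n i :=
  (le_total i j).elim (fun h => (commute_braidA_of_le n h).eq)
    (fun h => (commute_braidA_of_le n h).symm.eq)

theorem braidA_pairwise_commute (n : ℕ) (i j : ℕ)
    (hi : i < n - 1) (hj : j < n - 1) :
    braidA n i * braidA n j = braidA n j * braidA n i :=
  braidA_pairwise_commute_general n i j
end
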